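/- Let G be a finite connected simple graph with n ≥ 2 vertices and m edges. If m ≤ 3n, then the bondage number satisfies b(G) ≤ 11. -/

import Mathlib

/-- A finset `D` of vertices is a dominating set of `G` if every vertex not in `D`
is adjacent to some vertex in `D`. -/
def SimpleGraph.IsDominatingSet {V : Type*} (G : SimpleGraph V) (D : Finset V) : Prop :=
  ∀ v : V, v ∉ D → ∃ u ∈ D, G.Adj u v

/-- The domination number of `G`: the minimum cardinality of a dominating set. -/
noncomputable def SimpleGraph.dominationNumber {V : Type*} [Fintype V]
    (G : SimpleGraph V) : ℕ :=
  sInf {k | ∃ D : Finset V, G.IsDominatingSet D ∧ D.card = k}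

/-- The bondage number of `G`: the minimum cardinality of a set `B` of edges of `G`
whose removal increases the domination number. -/
noncomputable def SimpleGraph.bondageNumber {V : Type*} [Fintype V]
    (G : SimpleGraph V) : ℕ :=
  sInf {k | ∃ B : Finset (Sym2 V), ↑B ⊆ G.edgeSet ∧ B.card = k ∧
    G.dominationNumber < (G.deleteEdges ↑B).dominationNumber}

/-!
If `u ≠ v` are joined by a path `u - w (- v)` of length at most two, delete every edge at `v` and
every edge at `u` except `uw`: at most `deg u + deg v - 1` edges. In the new graph `v` is isolated
and `u` can only be dominated by `w`, so from any dominating set `D` of it the set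
`insert w (D \ {u, v})` dominates `G` and is smaller; the domination number has gone up.

It remains to find such a pair with `deg u + deg v ≤ 12` when `m ≤ 3n`, i.e. average degree at
most `6`. If there is none, the closed neighbourhoods of the vertices of degree `≤ 6` are pairwise
disjoint, each carries a degree sum of at least `7` per vertex minus `1`, and every other vertex
has degree `≥ 7`; hence `2m ≥ 7n - n / 2 > 6n`.
-/

open Finset

namespace SimpleGraph

variable {V : Type*}

section Domination

variable [Fintype V] {G H : SimpleGraph V}

theorem exists_isDominatingSet_card_eq_dominationNumber (G : SimpleGraph V) :
    ∃ D : Finset V, G.IsDominatingSet D ∧ D.card = G.dominationNumber :=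
  Nat.sInf_mem (s := {k | ∃ D : Finset V, G.IsDominatingSet D ∧ D.card = k})
    ⟨_, univ, fun v hv => absurd (mem_univ v) hv, rfl⟩

theorem dominationNumber_le_card {D : Finset V} (hD : G.IsDominatingSet D) :
    G.dominationNumber ≤ D.card :=
  Nat.sInf_le ⟨D, hD, rfl⟩

theorem dominationNumber_lt_of_forall_isDominatingSet
    (h : ∀ D, H.IsDominatingSet D → ∃ D', G.IsDominatingSet D' ∧ D'.card < D.card) :
    G.dominationNumber < H.dominationNumber := by
  obtain ⟨D, hD, hcard⟩ := H.exists_isDominatingSet_card_eq_dominationNumber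
  obtain ⟨D', hD', hlt⟩ := h D hD
  exact hcard ▸ (dominationNumber_le_card hD').trans_lt hlt

theorem bondageNumber_le_card {B : Finset (Sym2 V)} (hB : ↑B ⊆ G.edgeSet)
    (h : G.dominationNumber < (G.deleteEdges ↑B).dominationNumber) :
    G.bondageNumber ≤ B.card :=
  Nat.sInf_le ⟨B, hB, rfl, h⟩

end Domination

section Exchange

variable [DecidableEq V] {G H : SimpleGraph V} {D : Finset V} {u v w : V}

theorem IsDominatingSet.mem_of_forall_not_adj (hD : H.IsDominatingSet D)
    (hv : ∀ x, ¬H.Adj v x) : v ∈ D := by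
  by_contra hvD
  obtain ⟨y, -, hy⟩ := hD v hvD
  exact hv y hy.symm

variable (hD : H.IsDominatingSet D) (hv : ∀ x, ¬H.Adj v x) (hu : ∀ x, H.Adj u x → x = w)
include hD hv hu

theorem IsDominatingSet.insert_sdiff (hHG : H ≤ G) (huw : G.Adj u w)
    (hwv : w = v ∨ G.Adj w v) : G.IsDominatingSet (insert w (D \ {u, v})) := by
  intro x hx
  simp only [mem_insert, mem_sdiff, mem_singleton, not_or, not_and, not_not] at hx
  obtain ⟨hxw, hxD⟩ := hx
  by_cases hxu : x = u
  · exact ⟨w, mem_insert_self _ _, hxu ▸ huw.symm⟩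
  by_cases hxv : x = v
  · exact ⟨w, mem_insert_self _ _, hxv ▸ hwv.resolve_left (hxv ▸ Ne.symm hxw)⟩
  obtain ⟨y, hyD, hyx⟩ := hD x fun h => hxv (hxD h hxu)
  have hyu : y ≠ u := by rintro rfl; exact hxw (hu x hyx)
  have hyv : y ≠ v := by rintro rfl; exact hv x hyx
  exact ⟨y, mem_insert_of_mem (by simp [hyD, hyu, hyv]), hHG hyx⟩

theorem IsDominatingSet.card_insert_sdiff_lt (huv : u ≠ v) :
    (insert w (D \ {u, v})).card < D.card := by
  have hvD := hD.mem_of_forall_not_adj hv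
  by_cases huD : u ∈ D
  · have hsub : {u, v} ⊆ D := by simp [insert_subset_iff, huD, hvD]
    have := card_sdiff_of_subset hsub
    have := card_le_card hsub
    have := card_insert_le w (D \ {u, v})
    rw [card_pair huv] at *
    omega
  · obtain ⟨y, hyD, hyu⟩ := hD u huD
    obtain rfl := hu y hyu.symm
    have hyv : y ≠ v := by rintro rfl; exact hv u hyu
    rw [insert_eq_of_mem (by simp [hyD, hyu.ne, hyv])]
    exact card_lt_card ⟨sdiff_subset, fun h => by simpa using h hvD⟩

end Exchange

section Bondage

variable [Fintype V] [DecidableEq V] (G : SimpleGraph V) [DecidableRel G.Adj] {u v w : V}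

theorem bondageNumber_le_degree_add_degree_sub_one (huv : u ≠ v) (huw : G.Adj u w)
    (hwv : w = v ∨ G.Adj w v) : G.bondageNumber ≤ G.degree u + G.degree v - 1 := by
  set B := G.incidenceFinset v ∪ (G.incidenceFinset u).erase s(u, w)
  have hB : ↑B ⊆ G.edgeSet := by
    intro e he
    simp only [B, coe_union, coe_erase, Set.mem_union, Set.mem_sdiff, mem_coe,
      mem_incidenceFinset] at he
    exact he.elim (·.1) (·.1.1)
  have hcard : B.card ≤ G.degree u + G.degree v - 1 := by
    have huw_mem : s(u, w) ∈ G.incidenceFinset u := by simpa using huw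
    calc B.card ≤ G.degree v + (G.degree u - 1) := by
          grw [card_union_le, card_erase_of_mem huw_mem, card_incidenceFinset_eq_degree,
            card_incidenceFinset_eq_degree]
      _ = G.degree u + G.degree v - 1 := by have := huw.degree_pos_left; omega
  have hv : ∀ x, ¬(G.deleteEdges ↑B).Adj v x := fun x hvx =>
    (deleteEdges_adj.1 hvx).2 (by simp [B, (deleteEdges_adj.1 hvx).1])
  have hu : ∀ x, (G.deleteEdges ↑B).Adj u x → x = w := by
    intro x hux
    by_contra hxw
    exact (deleteEdges_adj.1 hux).2 (by simp [B, hxw, huw.ne, (deleteEdges_adj.1 hux).1])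
  refine (G.bondageNumber_le_card hB ?_).trans hcard
  exact dominationNumber_lt_of_forall_isDominatingSet fun D hD =>
    ⟨_, hD.insert_sdiff hv hu (deleteEdges_le _) huw hwv, hD.card_insert_sdiff_lt hv hu huv⟩

end Bondage

section Counting

variable [Fintype V] [DecidableEq V] {G : SimpleGraph V} [DecidableRel G.Adj] {k : ℕ}

variable (hfar : ∀ u v w, u ≠ v → G.Adj u w → (w = v ∨ G.Adj w v) →
  2 * k < G.degree u + G.degree v)
include hfar

theorem pairwiseDisjoint_insert_neighborFinset :
    {x | G.degree x ≤ k}.PairwiseDisjoint fun a => insert a (G.neighborFinset a) := by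
  intro a (ha : G.degree a ≤ k) b (hb : G.degree b ≤ k) hab
  rw [Function.onFun, Finset.disjoint_left]
  intro x hxa hxb
  simp only [mem_insert, mem_neighborFinset] at hxa hxb
  obtain ⟨w, haw, hwb⟩ : ∃ w, G.Adj a w ∧ (w = b ∨ G.Adj w b) := by
    rcases hxa with rfl | hax <;> rcases hxb with hxb | hbx
    · exact absurd hxb hab
    · exact ⟨b, hbx.symm, Or.inl rfl⟩
    · exact ⟨b, hxb ▸ hax, Or.inl rfl⟩
    · exact ⟨x, hax, Or.inr hbx.symm⟩
  have := hfar a b w hab haw hwb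
  omega

theorem card_mul_le_sum_degree_insert_neighborFinset {v : V} (hv0 : 0 < G.degree v)
    (hvk : G.degree v ≤ k) :
    (k + 1) * (insert v (G.neighborFinset v)).card
      ≤ ∑ x ∈ insert v (G.neighborFinset v), G.degree x + 1 := by
  have hnb : ∀ x ∈ G.neighborFinset v, 2 * k + 1 - G.degree v ≤ G.degree x := fun x hx => by
    have hvx := (G.mem_neighborFinset v x).1 hx
    have := hfar v x x hvx.ne hvx (Or.inl rfl)
    omega
  have hsum := card_nsmul_le_sum _ _ _ hnb
  rw [card_neighborFinset_eq_degree, smul_eq_mul] at hsum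
  rw [sum_insert (G.notMem_neighborFinset_self v), card_insert_of_notMem
    (G.notMem_neighborFinset_self v), card_neighborFinset_eq_degree]
  obtain ⟨e, he⟩ := Nat.exists_eq_add_of_le hvk
  rw [he, show 2 * (G.degree v + e) + 1 - G.degree v = G.degree v + 2 * e + 1 by omega] at hsum
  rw [he]
  -- with `d = deg v`, the slack is `(d - 1) * (k - d)`
  nlinarith

end Counting

theorem exists_near_pair_degree_add_degree_le [Fintype V] [DecidableEq V] [Nonempty V]
    (G : SimpleGraph V) [DecidableRel G.Adj] {k : ℕ} (hdeg : ∀ x, 0 < G.degree x)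
    (hm : 2 * #G.edgeFinset ≤ k * Fintype.card V) :
    ∃ u v w, u ≠ v ∧ G.Adj u w ∧ (w = v ∨ G.Adj w v) ∧
      G.degree u + G.degree v ≤ 2 * k := by
  by_contra! hfar
  set S : Finset V := {x | G.degree x ≤ k}
  set T := S.biUnion fun a => insert a (G.neighborFinset a)
  have hdisj : (S : Set V).PairwiseDisjoint fun a => insert a (G.neighborFinset a) :=
    (pairwiseDisjoint_insert_neighborFinset hfar).subset (by simp [S])
  have hT : (k + 1) * #T ≤ ∑ x ∈ T, G.degree x + #S := by
    rw [card_biUnion hdisj, sum_biUnion hdisj, mul_sum, card_eq_sum_ones S, ← sum_add_distrib]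
    exact sum_le_sum fun a ha => card_mul_le_sum_degree_insert_neighborFinset hfar (hdeg a)
      (mem_filter.1 ha).2
  have hTc : (k + 1) * #Tᶜ ≤ ∑ x ∈ Tᶜ, G.degree x := by
    rw [mul_comm, ← smul_eq_mul]
    refine card_nsmul_le_sum _ _ _ fun x hx => ?_
    by_contra! hxk
    exact mem_compl.1 hx
      (mem_biUnion.2 ⟨x, mem_filter.2 ⟨mem_univ x, by omega⟩, mem_insert_self _ _⟩)
  have hS : 2 * #S ≤ #T := by
    rw [card_biUnion hdisj, mul_comm, ← smul_eq_mul]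
    refine card_nsmul_le_sum _ _ _ fun a _ => ?_
    rw [card_insert_of_notMem (G.notMem_neighborFinset_self a), card_neighborFinset_eq_degree]
    exact Nat.succ_le_succ (hdeg a)
  have hsum : ∑ x ∈ T, G.degree x + ∑ x ∈ Tᶜ, G.degree x = 2 * #G.edgeFinset := by
    rw [sum_add_sum_compl, sum_degrees_eq_twice_card_edges]
  have hcard : #T + #Tᶜ = Fintype.card V := card_add_card_compl T
  have hk : k * Fintype.card V = k * #T + k * #Tᶜ := by rw [← mul_add, hcard]
  have hn := Fintype.card_pos (α := V)
  have := card_le_univ T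
  linarith

end SimpleGraph

theorem stmt_19 {V : Type*} [Fintype V] [DecidableEq V] (G : SimpleGraph V)
    [DecidableRel G.Adj] (hconn : G.Connected) (hn : 2 ≤ Fintype.card V)
    (hm : G.edgeFinset.card ≤ 3 * Fintype.card V) :
    G.bondageNumber ≤ 11 := by
  have : Nontrivial V := Fintype.one_lt_card_iff_nontrivial.1 hn
  have : Nonempty V := hconn.nonempty
  obtain ⟨u, v, w, huv, huw, hwv, hdeg⟩ := G.exists_near_pair_degree_add_degree_le (k := 6)
    (fun x => hconn.preconnected.degree_pos_of_nontrivial x) (by omega)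
  calc G.bondageNumber ≤ G.degree u + G.degree v - 1 :=
        G.bondageNumber_le_degree_add_degree_sub_one huv huw hwv
    _ ≤ 11 := by omega
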